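/- arXiv:1302.4910 — 2 statements merged into one kernel-verified Lean document; each statement's English description precedes it below -/
import Mathlib

section
/- Let f : ℝⁿ → ℝ be smooth and positive with ∫ f dγ = 1, barycenter μ := ∫ x f(x) dγ(x), and f log f integrable with respect to dγ. Define f̂(x) := f(x + μ) · e^{−(μ·x + |μ|²/2)}. Then Ent(f̂) = Ent(f) − |μ|²/2, i.e., ∫ f̂ log f̂ dγ = ∫ f log f dγ − |μ|²/2. -/
/- Common setup: the standard Gaussian measure on ℝⁿ, entropy, Fisher information,
log-Sobolev deficit, 2-Wasserstein distance, the class F(ε,M), and Hessian matrices. -/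

open MeasureTheory Real
open scoped RealInnerProductSpace

/-- The standard Gaussian probability measure `dγ = (2π)^{-n/2} e^{-|x|²/2} dx` on `ℝⁿ`. -/
noncomputable def gaussianM (n : ℕ) : Measure (EuclideanSpace ℝ (Fin n)) :=
  volume.withDensity fun x => ENNReal.ofReal ((2 * π) ^ (-(n : ℝ) / 2) * Real.exp (-‖x‖ ^ 2 / 2))

/-- Entropy `Ent(f) = ∫ f log f dγ − ‖f‖_{L¹(dγ)} log ‖f‖_{L¹(dγ)}`. -/
noncomputable def Ent (n : ℕ) (f : EuclideanSpace ℝ (Fin n) → ℝ) : ℝ :=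
  (∫ x, f x * Real.log (f x) ∂gaussianM n) -
    (∫ x, f x ∂gaussianM n) * Real.log (∫ x, f x ∂gaussianM n)

/-- Fisher information `I(f) = ∫ |∇f|²/f dγ`. -/
noncomputable def Fisher (n : ℕ) (f : EuclideanSpace ℝ (Fin n) → ℝ) : ℝ :=
  ∫ x, ‖gradient f x‖ ^ 2 / f x ∂gaussianM n

/-- The log-Sobolev deficit `δ(f) = (1/2) I(f) − Ent(f)`. -/
noncomputable def deficit (n : ℕ) (f : EuclideanSpace ℝ (Fin n) → ℝ) : ℝ :=
  (1 / 2) * Fisher n f - Ent n f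

/-- The 2-Wasserstein distance between two measures on `ℝⁿ`:
`W₂(μ,ν) = (inf_π ∫ |x−y|² dπ)^{1/2}`, the infimum running over couplings of `μ` and `ν`. -/
noncomputable def W2 {n : ℕ} (μ ν : Measure (EuclideanSpace ℝ (Fin n))) : ℝ :=
  Real.sqrt (sInf {c : ℝ |
    ∃ pl : Measure (EuclideanSpace ℝ (Fin n) × EuclideanSpace ℝ (Fin n)),
      IsProbabilityMeasure pl ∧ pl.map Prod.fst = μ ∧ pl.map Prod.snd = ν ∧
      c = ∫ p, ‖p.1 - p.2‖ ^ 2 ∂pl})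

/-- The class `F(ε,M)`: functions `f = e^{-h}` with `h` twice differentiable and
`(−1+ε)·Id ≤ D²h(x) ≤ M·Id` for all `x` (as quadratic forms). -/
def memF (n : ℕ) (ε M : ℝ) (f : EuclideanSpace ℝ (Fin n) → ℝ) : Prop :=
  ∃ h : EuclideanSpace ℝ (Fin n) → ℝ,
    (∀ x, f x = Real.exp (-h x)) ∧
    Differentiable ℝ h ∧ Differentiable ℝ (fderiv ℝ h) ∧
    (∀ x v, (-1 + ε) * ‖v‖ ^ 2 ≤ fderiv ℝ (fderiv ℝ h) x v v) ∧
    (∀ x v, fderiv ℝ (fderiv ℝ h) x v v ≤ M * ‖v‖ ^ 2)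

/-- The Hessian matrix `D²g(x)` of `g : ℝⁿ → ℝ`, in the standard basis. -/
noncomputable def hessM (n : ℕ) (g : EuclideanSpace ℝ (Fin n) → ℝ)
    (x : EuclideanSpace ℝ (Fin n)) : Matrix (Fin n) (Fin n) ℝ :=
  Matrix.of fun i j =>
    fderiv ℝ (fderiv ℝ g) x (EuclideanSpace.single i 1) (EuclideanSpace.single j 1)


section Helpers
open scoped ENNReal NNReal

noncomputable def gDen (n : ℕ) (x : EuclideanSpace ℝ (Fin n)) : ℝ :=
  (2 * π) ^ (-(n : ℝ) / 2) * Real.exp (-‖x‖ ^ 2 / 2)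

lemma gDen_pos (n : ℕ) (x : EuclideanSpace ℝ (Fin n)) : 0 < gDen n x :=
  mul_pos (Real.rpow_pos_of_pos (by positivity) _) (Real.exp_pos _)

lemma gDen_meas (n : ℕ) : Measurable fun x : EuclideanSpace ℝ (Fin n) => (gDen n x).toNNReal := by
  apply Measurable.real_toNNReal
  apply Measurable.const_mul
  exact (Real.continuous_exp.comp (by continuity)).measurable

lemma gaussianM_eq (n : ℕ) :
    gaussianM n = volume.withDensity fun x => (((gDen n x).toNNReal : NNReal) : ENNReal) := rfl

lemma integral_gaussianM {n : ℕ} {E : Type*} [NormedAddCommGroup E] [NormedSpace ℝ E]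
    (F : EuclideanSpace ℝ (Fin n) → E) :
    ∫ x, F x ∂gaussianM n = ∫ x, gDen n x • F x := by
  rw [gaussianM_eq, integral_withDensity_eq_integral_smul (gDen_meas n)]
  refine integral_congr_ae (Filter.Eventually.of_forall fun x => ?_)
  simp only [NNReal.smul_def, Real.coe_toNNReal _ (gDen_pos n x).le]

lemma integral_gaussianM' {n : ℕ} (F : EuclideanSpace ℝ (Fin n) → ℝ) :
    ∫ x, F x ∂gaussianM n = ∫ x, gDen n x * F x := by
  rw [integral_gaussianM]; simp only [smul_eq_mul]

lemma integrable_gaussianM_iff {n : ℕ} {E : Type*} [NormedAddCommGroup E] [NormedSpace ℝ E]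
    {F : EuclideanSpace ℝ (Fin n) → E} :
    Integrable F (gaussianM n) ↔ Integrable (fun x => gDen n x • F x) volume := by
  rw [gaussianM_eq, integrable_withDensity_iff_integrable_smul (gDen_meas n)]
  constructor <;> intro h <;> refine h.congr (Filter.Eventually.of_forall fun x => ?_) <;>
    simp only [NNReal.smul_def, Real.coe_toNNReal _ (gDen_pos n x).le]

lemma integrable_gaussianM_iff' {n : ℕ} {F : EuclideanSpace ℝ (Fin n) → ℝ} :
    Integrable F (gaussianM n) ↔ Integrable (fun x => gDen n x * F x) volume := by
  rw [integrable_gaussianM_iff]; simp only [smul_eq_mul]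

lemma gDen_add (n : ℕ) (x μ : EuclideanSpace ℝ (Fin n)) :
    gDen n (x + μ) = gDen n x * Real.exp (-(⟪μ, x⟫ + ‖μ‖ ^ 2 / 2)) := by
  unfold gDen
  rw [show (-‖x + μ‖ ^ 2 / 2 : ℝ) = -‖x‖ ^ 2 / 2 + -(⟪μ, x⟫ + ‖μ‖ ^ 2 / 2) by
    rw [norm_add_sq_real, real_inner_comm]; ring, Real.exp_add]
  ring

end Helpers

/-- **Entropy under recentering.** If `f` is smooth, positive, of unit mass with barycenter
`μ` and `f log f ∈ L¹(dγ)`, then `f̂(x) = f(x+μ) e^{−(μ·x + |μ|²/2)}` satisfies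
`Ent(f̂) = Ent(f) − |μ|²/2`, i.e. `∫ f̂ log f̂ dγ = ∫ f log f dγ − |μ|²/2`. -/
theorem recenter_entropy (n : ℕ) (f : EuclideanSpace ℝ (Fin n) → ℝ)
    (hsmooth : ContDiff ℝ (⊤ : ℕ∞) f) (hpos : ∀ x, 0 < f x)
    (hmass : ∫ x, f x ∂gaussianM n = 1)
    (hbarint : Integrable (fun x => f x • x) (gaussianM n))
    (hlogint : Integrable (fun x => f x * Real.log (f x)) (gaussianM n))
    (μ : EuclideanSpace ℝ (Fin n)) (hμ : μ = ∫ x, f x • x ∂gaussianM n)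
    (fhat : EuclideanSpace ℝ (Fin n) → ℝ)
    (hfhat : ∀ x, fhat x = f (x + μ) * Real.exp (-(⟪μ, x⟫ + ‖μ‖ ^ 2 / 2))) :
    (∫ x, fhat x * Real.log (fhat x) ∂gaussianM n
        = (∫ x, f x * Real.log (f x) ∂gaussianM n) - ‖μ‖ ^ 2 / 2) ∧
    Ent n fhat = Ent n f - ‖μ‖ ^ 2 / 2 := by
  have hfint : Integrable f (gaussianM n) := by
    by_contra h
    rw [integral_undef h] at hmass
    exact one_ne_zero hmass.symm
  have hinner : Integrable (fun x => (f x * ⟪μ, x⟫ : ℝ)) (gaussianM n) := by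
    have h2 := (innerSL ℝ μ).integrable_comp hbarint
    refine h2.congr (Filter.Eventually.of_forall fun x => ?_)
    simp [real_inner_smul_right]
  have J1 : Integrable (fun y => gDen n y * (f y * Real.log (f y))) volume :=
    integrable_gaussianM_iff'.mp hlogint
  have J2 : Integrable (fun y => gDen n y * (f y * ⟪μ, y⟫)) volume :=
    integrable_gaussianM_iff'.mp hinner
  have J3 : Integrable (fun y => gDen n y * f y) volume := integrable_gaussianM_iff'.mp hfint
  have I2 : ∫ x, f x * ⟪μ, x⟫ ∂gaussianM n = ‖μ‖ ^ 2 := by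
    have h3 := (innerSL ℝ μ).integral_comp_comm hbarint
    simp only [innerSL_apply_apply] at h3
    rw [← hμ] at h3
    calc ∫ x, f x * ⟪μ, x⟫ ∂gaussianM n = ∫ x, ⟪μ, f x • x⟫ ∂gaussianM n := by
          refine integral_congr_ae (Filter.Eventually.of_forall fun x => ?_)
          exact (real_inner_smul_right μ x (f x)).symm
      _ = ⟪μ, μ⟫ := h3
      _ = ‖μ‖ ^ 2 := real_inner_self_eq_norm_sq μ
  have hmasshat : ∫ x, fhat x ∂gaussianM n = 1 := by
    rw [integral_gaussianM']
    have e1 : ∫ x, gDen n x * fhat x = ∫ x, gDen n (x + μ) * f (x + μ) := by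
      refine integral_congr_ae (Filter.Eventually.of_forall fun x => ?_)
      simp only [hfhat, gDen_add]
      ring
    have e2 := integral_add_right_eq_self (μ := volume) (fun y => gDen n y * f y) μ
    rw [e1, e2, ← integral_gaussianM']
    exact hmass
  have key : ∫ x, fhat x * Real.log (fhat x) ∂gaussianM n
      = (∫ x, f x * Real.log (f x) ∂gaussianM n) - ‖μ‖ ^ 2 / 2 := by
    rw [integral_gaussianM']
    have e1 : ∫ x, gDen n x * (fhat x * Real.log (fhat x))
        = ∫ x, (gDen n (x + μ) * (f (x + μ) * Real.log (f (x + μ)))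
            - gDen n (x + μ) * (f (x + μ) * ⟪μ, x + μ⟫)
            + (‖μ‖ ^ 2 / 2) * (gDen n (x + μ) * f (x + μ))) := by
      refine integral_congr_ae (Filter.Eventually.of_forall fun x => ?_)
      have hlog : Real.log (fhat x) = Real.log (f (x + μ)) - (⟪μ, x⟫ + ‖μ‖ ^ 2 / 2) := by
        rw [hfhat x, Real.log_mul (hpos _).ne' (Real.exp_ne_zero _), Real.log_exp]; ring
      have hinner2 : ⟪μ, x + μ⟫ = ⟪μ, x⟫ + ‖μ‖ ^ 2 := by
        rw [inner_add_right, real_inner_self_eq_norm_sq]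
      have hlog2 : Real.log (f (x + μ) * Real.exp (-(⟪μ, x⟫ + ‖μ‖ ^ 2 / 2)))
          = Real.log (f (x + μ)) - (⟪μ, x⟫ + ‖μ‖ ^ 2 / 2) := by
        rw [Real.log_mul (hpos _).ne' (Real.exp_ne_zero _), Real.log_exp]; ring
      simp only [hfhat, hlog2, gDen_add, hinner2]
      ring
    have e2 := integral_add_right_eq_self (μ := volume) (fun y =>
      gDen n y * (f y * Real.log (f y)) - gDen n y * (f y * ⟪μ, y⟫)
        + (‖μ‖ ^ 2 / 2) * (gDen n y * f y)) μ
    have J12 : Integrable (fun y => gDen n y * (f y * Real.log (f y))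
        - gDen n y * (f y * ⟪μ, y⟫)) volume := J1.sub J2
    rw [e1, e2, integral_add J12 (J3.const_mul _), integral_sub J1 J2,
      integral_const_mul, ← integral_gaussianM', ← integral_gaussianM', ← integral_gaussianM',
      hmass, I2]
    ring
  refine ⟨key, ?_⟩
  unfold Ent
  rw [key, hmass, hmasshat]
  simp
end

section
/- Let α ∈ (0, 1/2] and C > 0. There exists a constant C̃ = C̃(α, C) > 0 such that the following holds: for all nonnegative real numbers E, W, I, δ satisfying δ = (1/2)I − E, E ≤ W√I − (1/2)W², and W ≤ C δ^α, one has E ≤ C̃ (δ^{1/2 + α} + δ^{2α}). (Interpretation: if a function class satisfies the stability estimate W₂(f dγ, dγ) ≤ C δ(f)^α, then by the HWI inequality Ent(f) ≤ W₂√I(f) − W₂²/2 one obtains Ent(f) ≤ C̃(δ(f)^{1/2+α} + δ(f)^{2α}).) -/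
open MeasureTheory Real
open scoped RealInnerProductSpace

/- The HWI inequality gives `E ≤ W √I` with `I = 2 (E + δ)`, a quadratic inequality in `E` whose
solution is `E ≲ W² + W √δ`; inserting the stability estimate `W ≤ C δ^α` turns the two terms
into `δ^{2α}` and `δ^{1/2+α}`. -/

theorem le_two_mul_sq_add_two_mul_sqrt_of_sq_le {E W δ : ℝ} (hW : 0 ≤ W) (hδ : 0 ≤ δ)
    (h : E ^ 2 ≤ 2 * W ^ 2 * (E + δ)) : E ≤ 2 * W ^ 2 + 2 * W * √δ := by
  have hs : √δ ^ 2 = δ := sq_sqrt hδ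
  have hWs : 0 ≤ W * √δ := mul_nonneg hW (sqrt_nonneg δ)
  by_contra! hlt
  nlinarith [mul_le_mul_of_nonneg_left hlt.le hWs]

theorem le_two_mul_sq_add_two_mul_sqrt_of_hwi {E W I δ : ℝ} (hE : 0 ≤ E) (hW : 0 ≤ W)
    (hI : 0 ≤ I) (hδ : 0 ≤ δ) (hdef : δ = 1 / 2 * I - E) (hHWI : E ≤ W * √I - 1 / 2 * W ^ 2) :
    E ≤ 2 * W ^ 2 + 2 * W * √δ := by
  have hEW : E ≤ W * √I := by linarith [sq_nonneg W]
  refine le_two_mul_sq_add_two_mul_sqrt_of_sq_le hW hδ ?_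
  calc E ^ 2 ≤ (W * √I) ^ 2 := pow_le_pow_left₀ hE hEW 2
    _ = 2 * W ^ 2 * (E + δ) := by rw [mul_pow, sq_sqrt hI, hdef]; ring

theorem entropy_from_stability_general (α C : ℝ) (hα0 : 0 < α) (hC : 0 < C) :
    ∃ Ct : ℝ, 0 < Ct ∧
      ∀ E W I δ : ℝ, 0 ≤ E → 0 ≤ W → 0 ≤ I → 0 ≤ δ →
        δ = (1 / 2) * I - E →
        E ≤ W * Real.sqrt I - (1 / 2) * W ^ 2 →
        W ≤ C * δ ^ α →
        E ≤ Ct * (δ ^ ((1 : ℝ) / 2 + α) + δ ^ (2 * α)) := by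
  refine ⟨2 * C ^ 2 + 2 * C, by positivity, fun E W I δ hE hW hI hδ hdef hHWI hstab => ?_⟩
  have hsplit : δ ^ ((1 : ℝ) / 2 + α) = √δ * δ ^ α := by
    rw [rpow_add' hδ (by positivity), sqrt_eq_rpow]
  have hdouble : δ ^ (2 * α) = (δ ^ α) ^ 2 := by rw [mul_comm, rpow_mul hδ, rpow_two]
  have hδα : 0 ≤ δ ^ α := rpow_nonneg hδ α
  calc E ≤ 2 * W ^ 2 + 2 * W * √δ :=
        le_two_mul_sq_add_two_mul_sqrt_of_hwi hE hW hI hδ hdef hHWI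
    _ ≤ 2 * (C * δ ^ α) ^ 2 + 2 * (C * δ ^ α) * √δ := by gcongr
    _ ≤ (2 * C ^ 2 + 2 * C) * (δ ^ ((1 : ℝ) / 2 + α) + δ ^ (2 * α)) := by
      rw [hsplit, hdouble]
      nlinarith [mul_nonneg (mul_nonneg (sq_nonneg C) hδα) (sqrt_nonneg δ),
        mul_nonneg hC.le (sq_nonneg (δ ^ α))]

/-- **Abstract entropy bound from a stability estimate (Lemma 4.1).** For `α ∈ (0,1/2]`
and `C > 0` there is `C̃ > 0` such that whenever nonnegative reals `E, W, I, δ` satisfy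
`δ = (1/2)I − E`, the HWI-type bound `E ≤ W√I − W²/2`, and `W ≤ C δ^α`, one has
`E ≤ C̃ (δ^{1/2+α} + δ^{2α})`. -/
theorem entropy_from_stability (α C : ℝ) (hα0 : 0 < α) (hα : α ≤ 1 / 2) (hC : 0 < C) :
    ∃ Ct : ℝ, 0 < Ct ∧
      ∀ E W I δ : ℝ, 0 ≤ E → 0 ≤ W → 0 ≤ I → 0 ≤ δ →
        δ = (1 / 2) * I - E →
        E ≤ W * Real.sqrt I - (1 / 2) * W ^ 2 →
        W ≤ C * δ ^ α →
        E ≤ Ct * (δ ^ ((1 : ℝ) / 2 + α) + δ ^ (2 * α)) :=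
  entropy_from_stability_general α C hα0 hC
end
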